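/- Let m, n ≥ 3 be integers with at least one of m, n odd, and let G_{m,n} be the subgroup of SL(2,ℝ) generated by A = [[1, 2cos(π/m) + 2cos(π/n)], [0, 1]] and B = [[2cos(π/m), 1], [−1, 0]]. Then each of the points 0, 1, and ∞ is a parabolic fixed point of G_{m,n}: for each of these three points there exists a parabolic element of G_{m,n} fixing it under the Möbius action. -/

import Mathlib

open Real Matrix

/-- A matrix in SL(2,ℝ) is parabolic if it is not ±I and has trace of absolute value 2. -/
def IsParabolicMat (M : Matrix (Fin 2) (Fin 2) ℝ) : Prop :=
  M ≠ 1 ∧ M ≠ -1 ∧ |Matrix.trace M| = 2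

/-- The Möbius action of `M` fixes the real number `z`. -/
def MoebiusFixes (M : Matrix (Fin 2) (Fin 2) ℝ) (z : ℝ) : Prop :=
  M 0 0 * z + M 0 1 = (M 1 0 * z + M 1 1) * z

/-- The Möbius action of `M` fixes the point ∞. -/
def MoebiusFixesInf (M : Matrix (Fin 2) (Fin 2) ℝ) : Prop :=
  M 1 0 = 0

/-!
The translation `A` is parabolic and fixes `∞`, so every conjugate `g A g⁻¹` is parabolic
and fixes `g · ∞`, the point `g 0 0 / g 1 0`. It remains to find `g` in the group with
`g · ∞ = 0` and `g · ∞ = 1`; `B⁻¹` does the first. For the second, `B` and `AB` are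
elliptic of the form `R(θ) = [[2 cos θ, 1], [-1, 0]]` with `θ = π/m` and `θ = π - π/n`, and
`sin θ · R(θ)^j = [[sin (j+1)θ, sin jθ], [-sin jθ, -sin (j-1)θ]]`. If `n = 2k+1` then
`(AB)^k · ∞ = 1`; if `n = 2h` and `m = 2j+1` then `B^j · ∞ = -1` and `(AB)^h · (-1) = 1`.
-/

open scoped MatrixGroups

lemma SL2_det_fin_two {R : Type*} [CommRing R] (g : SL(2, R)) :
    g 0 0 * g 1 1 - g 0 1 * g 1 0 = 1 := by
  rw [← det_fin_two]
  exact g.2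

lemma coe_conj_translation {R : Type*} [CommRing R] {s : R} {T : SL(2, R)} (g : SL(2, R))
    (hT : (T : Matrix (Fin 2) (Fin 2) R) = !![1, s; 0, 1]) :
    ((g * T * g⁻¹ : SL(2, R)) : Matrix (Fin 2) (Fin 2) R) =
      !![1 - s * g 0 0 * g 1 0, s * g 0 0 ^ 2; -(s * g 1 0 ^ 2), 1 + s * g 0 0 * g 1 0] := by
  rw [Matrix.SpecialLinearGroup.coe_mul, Matrix.SpecialLinearGroup.coe_mul,
    Matrix.SpecialLinearGroup.coe_inv, hT, adjugate_fin_two]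
  ext i j
  fin_cases i <;> fin_cases j <;> simp [mul_apply, Fin.sum_univ_two] <;>
    first | ring1 | linear_combination SL2_det_fin_two g

section Conjugation

variable {s : ℝ} {T : SL(2, ℝ)} (g : SL(2, ℝ))

lemma isParabolicMat_conj_translation (hT : (T : Matrix (Fin 2) (Fin 2) ℝ) = !![1, s; 0, 1])
    (hs : s ≠ 0) :
    IsParabolicMat ((g * T * g⁻¹ : SL(2, ℝ)) : Matrix (Fin 2) (Fin 2) ℝ) := by
  have ne_of_offDiag_eq_zero : ∀ M : Matrix (Fin 2) (Fin 2) ℝ, M 0 1 = 0 → M 1 0 = 0 →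
      ((g * T * g⁻¹ : SL(2, ℝ)) : Matrix (Fin 2) (Fin 2) ℝ) ≠ M := by
    intro M h01 h10 h
    have ha : g 0 0 = 0 := by
      simpa [coe_conj_translation g hT, h01, hs] using congr_fun₂ h 0 1
    have hc : g 1 0 = 0 := by
      simpa [coe_conj_translation g hT, h10, hs] using congr_fun₂ h 1 0
    simpa [ha, hc] using SL2_det_fin_two g
  refine ⟨ne_of_offDiag_eq_zero 1 (by simp) (by simp),
    ne_of_offDiag_eq_zero (-1) (by simp) (by simp), ?_⟩
  rw [coe_conj_translation g hT, trace_fin_two]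
  norm_num

lemma moebiusFixes_conj_translation (hT : (T : Matrix (Fin 2) (Fin 2) ℝ) = !![1, s; 0, 1])
    {z : ℝ} (hz : g 0 0 = z * g 1 0) :
    MoebiusFixes ((g * T * g⁻¹ : SL(2, ℝ)) : Matrix (Fin 2) (Fin 2) ℝ) z := by
  simp only [MoebiusFixes, coe_conj_translation g hT, hz, of_apply, cons_val', cons_val_zero,
    cons_val_fin_one, cons_val_one]
  ring

lemma moebiusFixesInf_conj_translation (hT : (T : Matrix (Fin 2) (Fin 2) ℝ) = !![1, s; 0, 1])
    (hg : g 1 0 = 0) :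
    MoebiusFixesInf ((g * T * g⁻¹ : SL(2, ℝ)) : Matrix (Fin 2) (Fin 2) ℝ) := by
  simp [MoebiusFixesInf, coe_conj_translation g hT, hg]

end Conjugation

lemma sin_pi_div_pos {x : ℝ} (hx : 1 < x) : 0 < sin (π / x) := by
  apply sin_pos_of_pos_of_lt_pi (by positivity)
  rw [div_lt_iff₀ (by positivity)]
  nlinarith [pi_pos]

lemma cos_pi_div_pos {x : ℝ} (hx : 2 < x) : 0 < cos (π / x) := by
  apply cos_pos_of_mem_Ioo ⟨by linarith [pi_pos, div_pos pi_pos (by linarith : 0 < x)], ?_⟩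
  rw [div_lt_div_iff₀ (by linarith) two_pos]
  nlinarith [pi_pos]

noncomputable def ellipticMat (θ : ℝ) : Matrix (Fin 2) (Fin 2) ℝ := !![2 * cos θ, 1; -1, 0]

lemma sin_smul_ellipticMat_pow (θ : ℝ) (j : ℕ) :
    sin θ • ellipticMat θ ^ j =
      !![sin ((j + 1) * θ), sin (j * θ); -sin (j * θ), -sin ((j - 1) * θ)] := by
  have recurrence (x : ℝ) :
      sin ((x + 1) * θ) + sin ((x - 1) * θ) = 2 * cos θ * sin (x * θ) := by
    rw [add_mul, sub_mul, one_mul, sin_add, sin_sub]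
    ring
  induction j with
  | zero => ext i j; fin_cases i <;> fin_cases j <;> simp
  | succ j ih =>
    rw [pow_succ, ← smul_mul, ih, ellipticMat]
    ext i l
    fin_cases i <;> fin_cases l <;> simp [mul_apply, Fin.sum_univ_two]
    · have h := recurrence (j + 1)
      rw [add_sub_cancel_right] at h
      linear_combination -h
    · linear_combination recurrence j

lemma ellipticMat_pow_apply_zero_zero_eq_of_odd {k : ℕ} (hk : 0 < k) :
    (ellipticMat (π - π / (2 * k + 1)) ^ k) 0 0 =
      (ellipticMat (π - π / (2 * k + 1)) ^ k) 1 0 := by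
  set θ := π - π / (2 * k + 1) with hθ
  have hsin : sin θ ≠ 0 := by
    rw [hθ, sin_pi_sub]; exact (sin_pi_div_pos (by norm_cast; omega)).ne'
  have h00 : sin θ * (ellipticMat θ ^ k) 0 0 = sin ((k + 1) * θ) := by
    simpa using congr_fun₂ (sin_smul_ellipticMat_pow θ k) 0 0
  have h10 : sin θ * (ellipticMat θ ^ k) 1 0 = -sin (k * θ) := by
    simpa using congr_fun₂ (sin_smul_ellipticMat_pow θ k) 1 0
  apply mul_left_cancel₀ hsin
  rw [h00, h10]
  have e1 : (k + 1) * θ = k * π + k * π / (2 * k + 1) := by rw [hθ]; field_simp; ring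
  have e2 : k * θ = k * π - k * π / (2 * k + 1) := by rw [hθ]; field_simp
  rw [e1, e2, sin_add, sin_sub, sin_nat_mul_pi]
  ring

lemma ellipticMat_pow_sub_eq_of_even {h : ℕ} (hh : 0 < h) :
    (ellipticMat (π - π / (2 * h)) ^ h) 0 0 - (ellipticMat (π - π / (2 * h)) ^ h) 0 1 =
      (ellipticMat (π - π / (2 * h)) ^ h) 1 0 - (ellipticMat (π - π / (2 * h)) ^ h) 1 1 := by
  set θ := π - π / (2 * h) with hθ
  have hsin : sin θ ≠ 0 := by
    rw [hθ, sin_pi_sub]; exact (sin_pi_div_pos (by norm_cast; omega)).ne'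
  have h00 : sin θ * (ellipticMat θ ^ h) 0 0 = sin ((h + 1) * θ) := by
    simpa using congr_fun₂ (sin_smul_ellipticMat_pow θ h) 0 0
  have h01 : sin θ * (ellipticMat θ ^ h) 0 1 = sin (h * θ) := by
    simpa using congr_fun₂ (sin_smul_ellipticMat_pow θ h) 0 1
  have h10 : sin θ * (ellipticMat θ ^ h) 1 0 = -sin (h * θ) := by
    simpa using congr_fun₂ (sin_smul_ellipticMat_pow θ h) 1 0
  have h11 : sin θ * (ellipticMat θ ^ h) 1 1 = -sin ((h - 1) * θ) := by
    simpa using congr_fun₂ (sin_smul_ellipticMat_pow θ h) 1 1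
  apply mul_left_cancel₀ hsin
  rw [mul_sub, mul_sub, h00, h01, h10, h11]
  have hcos : cos (h * θ) = 0 := by
    have e : h * θ = h * π - π / 2 := by rw [hθ]; field_simp
    rw [e, cos_sub_pi_div_two, sin_nat_mul_pi]
  simp only [add_mul, sub_mul, one_mul, sin_add, sin_sub, hcos]
  ring

lemma ellipticMat_pow_apply_zero_zero_eq_neg {j : ℕ} (hj : 0 < j) :
    (ellipticMat (π / (2 * j + 1)) ^ j) 0 0 = -(ellipticMat (π / (2 * j + 1)) ^ j) 1 0 := by
  set φ := π / (2 * j + 1) with hφ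
  have hsin : sin φ ≠ 0 := (sin_pi_div_pos (by norm_cast; omega)).ne'
  have h00 : sin φ * (ellipticMat φ ^ j) 0 0 = sin ((j + 1) * φ) := by
    simpa using congr_fun₂ (sin_smul_ellipticMat_pow φ j) 0 0
  have h10 : sin φ * (ellipticMat φ ^ j) 1 0 = -sin (j * φ) := by
    simpa using congr_fun₂ (sin_smul_ellipticMat_pow φ j) 1 0
  apply mul_left_cancel₀ hsin
  rw [mul_neg, h00, h10, neg_neg]
  have e : (j + 1) * φ = π - j * φ := by rw [hφ]; field_simp; ring
  rw [e, sin_pi_sub]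

lemma mul_apply_zero_zero_eq_mul_apply_one_zero {P Q : Matrix (Fin 2) (Fin 2) ℝ}
    (hP : P 0 0 - P 0 1 = P 1 0 - P 1 1) (hQ : Q 0 0 = -Q 1 0) : (P * Q) 0 0 = (P * Q) 1 0 := by
  simp only [mul_apply, Fin.sum_univ_two, hQ]
  linear_combination (-Q 1 0) * hP

lemma exists_mem_closure_apply_zero_zero_eq {m n : ℕ} (hm : 3 ≤ m) (hn : 3 ≤ n)
    (hodd : Odd m ∨ Odd n) {A B : SL(2, ℝ)}
    (hAB : ((A * B : SL(2, ℝ)) : Matrix (Fin 2) (Fin 2) ℝ) = ellipticMat (π - π / n))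
    (hB : (B : Matrix (Fin 2) (Fin 2) ℝ) = ellipticMat (π / m)) :
    ∃ g ∈ Subgroup.closure ({A, B} : Set SL(2, ℝ)), g 0 0 = g 1 0 := by
  have hAmem : A ∈ Subgroup.closure ({A, B} : Set SL(2, ℝ)) := Subgroup.subset_closure (by simp)
  have hBmem : B ∈ Subgroup.closure ({A, B} : Set SL(2, ℝ)) := Subgroup.subset_closure (by simp)
  rcases Nat.even_or_odd' n with ⟨k, rfl | rfl⟩
  · obtain ⟨j, rfl⟩ := hodd.resolve_right (by simp)
    refine ⟨(A * B) ^ k * B ^ j,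
      mul_mem (pow_mem (mul_mem hAmem hBmem) k) (pow_mem hBmem j), ?_⟩
    rw [Matrix.SpecialLinearGroup.coe_mul, Matrix.SpecialLinearGroup.coe_pow,
      Matrix.SpecialLinearGroup.coe_pow, hAB, hB]
    push_cast
    exact mul_apply_zero_zero_eq_mul_apply_one_zero (ellipticMat_pow_sub_eq_of_even (by omega))
      (ellipticMat_pow_apply_zero_zero_eq_neg (by omega))
  · refine ⟨(A * B) ^ k, pow_mem (mul_mem hAmem hBmem) k, ?_⟩
    rw [Matrix.SpecialLinearGroup.coe_pow, hAB]
    push_cast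
    exact ellipticMat_pow_apply_zero_zero_eq_of_odd (by omega)

theorem stmt11 (m n : ℕ) (hm : 3 ≤ m) (hn : 3 ≤ n) (hodd : Odd m ∨ Odd n)
    (A B : Matrix.SpecialLinearGroup (Fin 2) ℝ)
    (hA : (A : Matrix (Fin 2) (Fin 2) ℝ) =
      !![1, 2 * Real.cos (Real.pi / (m : ℝ)) + 2 * Real.cos (Real.pi / (n : ℝ)); 0, 1])
    (hB : (B : Matrix (Fin 2) (Fin 2) ℝ) =
      !![2 * Real.cos (Real.pi / (m : ℝ)), 1; -1, 0]) :
    (∃ P ∈ Subgroup.closure ({A, B} : Set (Matrix.SpecialLinearGroup (Fin 2) ℝ)),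
      IsParabolicMat (P : Matrix (Fin 2) (Fin 2) ℝ) ∧
        MoebiusFixes (P : Matrix (Fin 2) (Fin 2) ℝ) 0) ∧
    (∃ P ∈ Subgroup.closure ({A, B} : Set (Matrix.SpecialLinearGroup (Fin 2) ℝ)),
      IsParabolicMat (P : Matrix (Fin 2) (Fin 2) ℝ) ∧
        MoebiusFixes (P : Matrix (Fin 2) (Fin 2) ℝ) 1) ∧
    (∃ P ∈ Subgroup.closure ({A, B} : Set (Matrix.SpecialLinearGroup (Fin 2) ℝ)),
      IsParabolicMat (P : Matrix (Fin 2) (Fin 2) ℝ) ∧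
        MoebiusFixesInf (P : Matrix (Fin 2) (Fin 2) ℝ)) := by
  have hm' : (2 : ℝ) < m := by exact_mod_cast hm
  have hn' : (2 : ℝ) < n := by exact_mod_cast hn
  have hs : 2 * cos (π / m) + 2 * cos (π / n) ≠ 0 := by
    linarith [cos_pi_div_pos hm', cos_pi_div_pos hn']
  have hAB : ((A * B : SL(2, ℝ)) : Matrix (Fin 2) (Fin 2) ℝ) = ellipticMat (π - π / n) := by
    rw [Matrix.SpecialLinearGroup.coe_mul, hA, hB, ellipticMat, cos_pi_sub, mul_fin_two]
    congr <;> ring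
  have conj_mem : ∀ g ∈ Subgroup.closure ({A, B} : Set SL(2, ℝ)),
      g * A * g⁻¹ ∈ Subgroup.closure ({A, B} : Set SL(2, ℝ)) := fun g hg =>
    mul_mem (mul_mem hg (Subgroup.subset_closure (by simp))) (inv_mem hg)
  obtain ⟨g, hg, hg1⟩ := exists_mem_closure_apply_zero_zero_eq hm hn hodd hAB hB
  refine ⟨⟨B⁻¹ * A * B⁻¹⁻¹, conj_mem _ (inv_mem (Subgroup.subset_closure (by simp))),
      isParabolicMat_conj_translation _ hA hs, moebiusFixes_conj_translation _ hA ?_⟩,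
    ⟨g * A * g⁻¹, conj_mem g hg, isParabolicMat_conj_translation _ hA hs,
      moebiusFixes_conj_translation _ hA (by rw [hg1, one_mul])⟩,
    ⟨1 * A * 1⁻¹, conj_mem 1 (one_mem _), isParabolicMat_conj_translation _ hA hs,
      moebiusFixesInf_conj_translation _ hA (by simp)⟩⟩
  simp [Matrix.SpecialLinearGroup.coe_inv, hB, adjugate_fin_two]
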